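/- Let X be a real Banach space, let f ∈ Γ(X), and let x̄ ∈ X, ȳ* ∈ X* with ȳ* ∈ ∂f(x̄). Suppose ∂f is strongly metrically subregular at x̄ for ȳ*. Then there exists a constant c > 0 such that the contingent derivative D∂f(x̄|ȳ*) is positive-definite with modulus c, that is, ⟨z*, w⟩ ≥ c·‖w‖² for every w ∈ X and every z* ∈ D∂f(x̄|ȳ*)(w). -/

import Mathlib

open Topology Filter Metric Set

/-- The convex subdifferential of an extended-real-valued function `f` at `x`. -/
noncomputable def subdiff {X : Type*} [NormedAddCommGroup X] [NormedSpace ℝ X]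
    (f : X → EReal) (x : X) : Set (X →L[ℝ] ℝ) :=
  {p | f x ≠ ⊤ ∧ ∀ z : X, f x + ((p (z - x) : ℝ) : EReal) ≤ f z}

/-- The contingent (Bouligand) cone to `K` at `z`: vectors `v` for which there are
sequences `τₙ ↓ 0` and `wₙ → v` with `z + τₙ • wₙ ∈ K`. -/
def contingentCone {Z : Type*} [NormedAddCommGroup Z] [NormedSpace ℝ Z]
    (K : Set Z) (z : Z) : Set Z :=
  {v | ∃ τ : ℕ → ℝ, ∃ w : ℕ → Z, (∀ n, 0 < τ n) ∧
      Filter.Tendsto τ Filter.atTop (𝓝 0) ∧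
      Filter.Tendsto w Filter.atTop (𝓝 v) ∧ ∀ n, z + τ n • w n ∈ K}

/-!
Strong subregularity of `∂f` at `x̄` for `ȳ` forces quadratic growth
`f x ≥ f x̄ + ȳ (x - x̄) + c ‖x - x̄‖²` near `x̄`, with `c = 1 / (5κ)`. Indeed, if growth
failed at a point `x` with `‖x - x̄‖ = ρ`, then `ȳ` would be a `cρ²`-subgradient of `f` at `x`,
and the Brøndsted–Rockafellar theorem (Ekeland's principle followed by a Hahn–Banach sandwich
between `f` and a concave minorant) yields `u` with `‖u - x‖ ≤ ρ / 2` carrying a subgradient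
within `2cρ` of `ȳ`; subregularity then gives `ρ / 2 ≤ ‖u - x̄‖ ≤ 2κcρ`, which is absurd.
Given `(w, z)` in the contingent cone, realised by `x̄ + tₙ wₙ` with subgradients `ȳ + tₙ zₙ`,
adding the growth inequality at `x̄ + tₙ wₙ` to the subgradient inequality tested at `x̄`
gives `c ‖wₙ‖² ≤ zₙ wₙ`, and one passes to the limit.
-/

lemma LowerSemicontinuous.add_coe {Y : Type*} [TopologicalSpace Y] {f : Y → EReal}
    (hf : LowerSemicontinuous f) {φ : Y → ℝ} (hφ : Continuous φ) :
    LowerSemicontinuous fun y => f y + (φ y : EReal) :=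
  hf.add' (continuous_coe_real_ereal.comp hφ).lowerSemicontinuous fun _ =>
    EReal.continuousAt_add (Or.inr (EReal.coe_ne_bot _)) (Or.inr (EReal.coe_ne_top _))

lemma exists_forall_le_add_of_nonneg {X : Type*} {g : X → EReal} (hg0 : ∀ v, 0 ≤ g v)
    {s : Set X} (hs : s.Nonempty) {ε : ℝ} (hε : 0 < ε) : ∃ v ∈ s, ∀ w ∈ s, g v ≤ g w + ε := by
  obtain ⟨v₀, hv₀⟩ := hs
  have hm : ∀ w ∈ s, ⨅ w ∈ s, g w ≤ g w := fun w hw => iInf₂_le w hw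
  rcases eq_or_ne (⨅ w ∈ s, g w) ⊤ with htop | htop
  · exact ⟨v₀, hv₀, fun w hw => by simp [top_le_iff.1 (htop ▸ hm w hw)]⟩
  obtain ⟨m, hm'⟩ : ∃ m : ℝ, (m : EReal) = ⨅ w ∈ s, g w := ⟨_, EReal.coe_toReal htop
    (ne_bot_of_le_ne_bot EReal.zero_ne_bot (le_iInf₂ fun w _ => hg0 w))⟩
  obtain ⟨v, hv, hvlt⟩ : ∃ v ∈ s, g v < m + ε := by
    have : ⨅ w ∈ s, g w < m + ε := by
      rw [← hm']; exact_mod_cast lt_add_of_pos_right m hε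
    simpa only [iInf_lt_iff, exists_prop] using this
  exact ⟨v, hv, fun w hw => hvlt.le.trans (add_le_add_left (hm' ▸ hm w hw) _)⟩

section Ekeland

variable {X : Type*} [MetricSpace X] {g : X → EReal} {α : ℝ}

def ekelandSet (g : X → EReal) (α : ℝ) (u : X) : Set X :=
  {v | g v + ↑(α * dist v u) ≤ g u}

lemma self_mem_ekelandSet (g : X → EReal) (α : ℝ) (u : X) : u ∈ ekelandSet g α u := by
  simp [ekelandSet]

lemma le_of_mem_ekelandSet (hα : 0 ≤ α) {u v : X} (hv : v ∈ ekelandSet g α u) : g v ≤ g u :=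
  (le_add_of_nonneg_right (EReal.coe_nonneg.2 (by positivity))).trans hv

lemma ekelandSet_subset (hα : 0 ≤ α) {u v : X} (hv : v ∈ ekelandSet g α u) :
    ekelandSet g α v ⊆ ekelandSet g α u := fun w hw =>
  calc g w + ↑(α * dist w u) ≤ g w + ↑(α * dist w v) + ↑(α * dist v u) := by
        rw [add_assoc, ← EReal.coe_add, ← mul_add]
        gcongr
        exact dist_triangle w v u
    _ ≤ g v + ↑(α * dist v u) := add_le_add_left hw _
    _ ≤ g u := hv

lemma isClosed_ekelandSet (hg : LowerSemicontinuous g) (α : ℝ) (u : X) :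
    IsClosed (ekelandSet g α u) :=
  (hg.add_coe (continuous_const.mul (continuous_id.dist continuous_const))).isClosed_preimage (g u)

lemma dist_le_of_mem_ekelandSet (hg0 : ∀ v, 0 ≤ g v) (hα : 0 < α) {u v w : X} {ε : ℝ}
    (hv : v ∈ ekelandSet g α u) (hvmin : ∀ w ∈ ekelandSet g α u, g v ≤ g w + ↑(α * ε))
    (hvtop : g v ≠ ⊤) (hw : w ∈ ekelandSet g α v) : dist w v ≤ ε := by
  have h := hw.trans (hvmin w (ekelandSet_subset hα.le hv hw))
  obtain ⟨a, ha⟩ : ∃ a : ℝ, (a : EReal) = g w :=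
    ⟨_, EReal.coe_toReal (ne_top_of_le_ne_top hvtop (le_of_mem_ekelandSet hα.le hw))
      (ne_bot_of_le_ne_bot EReal.zero_ne_bot (hg0 w))⟩
  rw [← ha] at h
  norm_cast at h
  exact le_of_mul_le_mul_left (by linarith) hα

theorem ekeland_variational_principle [CompleteSpace X] (hg : LowerSemicontinuous g)
    (hg0 : ∀ v, 0 ≤ g v) (hα : 0 < α) {x : X} (hx : g x ≠ ⊤) :
    ∃ u, g u + ↑(α * dist u x) ≤ g x ∧ ∀ v, g u ≤ g v + ↑(α * dist v u) := by
  -- `u (n + 1)` minimises `g` on `ekelandSet g α (u n)` up to `α / (n + 1)`, which forces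
  -- `ekelandSet g α (u (n + 1))` into a ball of radius `1 / (n + 1)` around `u (n + 1)`.
  choose next hnext_mem hnext_min using fun (n : ℕ) (u : X) =>
    exists_forall_le_add_of_nonneg hg0 ⟨u, self_mem_ekelandSet g α u⟩
      (ε := α * (1 / (n + 1))) (by positivity)
  let u : ℕ → X := fun n => Nat.rec x next n
  have hanti : Antitone fun n => ekelandSet g α (u n) :=
    antitone_nat_of_succ_le fun n => ekelandSet_subset hα.le (hnext_mem n (u n))
  have hmem : ∀ {m n}, m ≤ n → u n ∈ ekelandSet g α (u m) :=
    fun h => hanti h (self_mem_ekelandSet _ _ _)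
  have hrad : ∀ n, ∀ w ∈ ekelandSet g α (u (n + 1)), dist w (u (n + 1)) ≤ 1 / (n + 1) :=
    fun n _ => dist_le_of_mem_ekelandSet hg0 hα (hnext_mem n (u n)) (hnext_min n (u n))
      (ne_top_of_le_ne_top hx (le_of_mem_ekelandSet hα.le (hmem (Nat.zero_le (n + 1)))))
  have hcauchy : CauchySeq fun n => u (n + 1) :=
    cauchySeq_of_le_tendsto_0' _ (fun n m hnm => by
      rw [dist_comm]; exact hrad n _ (hmem (Nat.succ_le_succ hnm)))
      tendsto_one_div_add_atTop_nhds_zero_nat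
  obtain ⟨ub, hub⟩ := cauchySeq_tendsto_of_complete hcauchy
  have hub_mem : ∀ n, ub ∈ ekelandSet g α (u n) := fun n =>
    (isClosed_ekelandSet hg α (u n)).mem_of_tendsto hub
      (eventually_atTop.2 ⟨n, fun m hm => hmem (Nat.le_succ_of_le hm)⟩)
  refine ⟨ub, hub_mem 0, fun v => ?_⟩
  by_contra! hlt
  have hv : dist v ub ≤ 0 :=
    le_of_tendsto_of_tendsto (tendsto_const_nhds.dist hub) tendsto_one_div_add_atTop_nhds_zero_nat
      (Eventually.of_forall fun n => hrad n v (ekelandSet_subset hα.le (hub_mem (n + 1)) hlt.le))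
  simp [dist_le_zero.1 hv] at hlt

end Ekeland

lemma ContinuousLinearMap.norm_le_of_forall_apply_le {X : Type*} [SeminormedAddCommGroup X]
    [NormedSpace ℝ X] (φ : X →L[ℝ] ℝ) {α : ℝ} (hα : 0 ≤ α) (h : ∀ v, φ v ≤ α * ‖v‖) :
    ‖φ‖ ≤ α :=
  φ.opNorm_le_bound hα fun v => abs_le.2
    ⟨neg_le.1 (by simpa using h (-v)), h v⟩

section Subdifferential

variable {X : Type*} [NormedAddCommGroup X] [NormedSpace ℝ X]

-- `EReal` is not an `ℝ`-module, so `ConvexOn` does not apply; this is the convexity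
-- inequality of the main theorem.
def ERealConvex (f : X → EReal) : Prop :=
  ∀ x y : X, ∀ a b : ℝ, 0 ≤ a → 0 ≤ b → a + b = 1 →
    f (a • x + b • y) ≤ (a : EReal) * f x + (b : EReal) * f y

lemma ERealConvex.convex_epigraph {f : X → EReal} (hf : ERealConvex f) :
    Convex ℝ {p : X × ℝ | f p.1 ≤ p.2} := by
  rintro ⟨x, s⟩ hx ⟨y, t⟩ hy a b ha hb hab
  calc f (a • x + b • y) ≤ (a : EReal) * f x + (b : EReal) * f y := hf x y a b ha hb hab
    _ ≤ (a : EReal) * s + (b : EReal) * t := by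
      gcongr <;> first | exact_mod_cast ha | exact_mod_cast hb | assumption
    _ = ↑(a * s + b * t) := by norm_cast

lemma ERealConvex.exists_separating {f : X → EReal} (hf : ERealConvex f) {M : X → ℝ}
    (hM : ConcaveOn ℝ univ M) (hM_cont : Continuous M) (hMf : ∀ v, (M v : EReal) ≤ f v)
    {u : X} (hu : f u ≠ ⊤) :
    ∃ (ℓ : X →L[ℝ] ℝ) (β t : ℝ), 0 < β ∧ (∀ v, ℓ v + M v * β ≤ t) ∧
      ∀ v (s : ℝ), f v ≤ s → t ≤ ℓ v + s * β := by
  have hdisj : Disjoint {p : X × ℝ | p.2 < M p.1} {p : X × ℝ | f p.1 ≤ p.2} :=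
    Set.disjoint_left.2 fun p hB hA =>
      (hMf p.1).not_gt (hA.trans_lt (EReal.coe_lt_coe_iff.2 hB))
  obtain ⟨φ, t, hφB, hφA⟩ := geometric_hahn_banach_open
    (by simpa using hM.convex_strict_hypograph)
    (isOpen_lt continuous_snd (hM_cont.comp continuous_fst)) hf.convex_epigraph hdisj
  set ℓ : X →L[ℝ] ℝ := φ.comp (ContinuousLinearMap.inl ℝ X ℝ)
  set β : ℝ := φ (0, 1)
  have hφ : ∀ v s, φ (v, s) = ℓ v + s * β := fun v s => by
    rw [show ((v, s) : X × ℝ) = (v, 0) + s • (0, 1) by simp, map_add, map_smul, smul_eq_mul]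
    rfl
  have hA : ∀ v (s : ℝ), f v ≤ s → t ≤ ℓ v + s * β := fun v s hs => hφ v s ▸ hφA (v, s) hs
  -- `φ < t` on the open strict hypograph, hence `φ ≤ t` on the graph of `M`
  have hB : ∀ v, ℓ v + M v * β ≤ t := fun v => by
    have hlim : Tendsto (fun s => ℓ v + s * β) (𝓝[<] (M v)) (𝓝 (ℓ v + M v * β)) :=
      ((Continuous.tendsto (by fun_prop) _).mono_left nhdsWithin_le_nhds)
    exact le_of_tendsto hlim
      (eventually_nhdsWithin_of_forall fun s hs => (hφ v s ▸ hφB (v, s) hs).le)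
  obtain ⟨r, hr⟩ : ∃ r : ℝ, (r : EReal) = f u :=
    ⟨_, EReal.coe_toReal hu (ne_bot_of_le_ne_bot (EReal.coe_ne_bot _) (hMf u))⟩
  have hβ : 0 < β := by
    have h1 := hφ u (M u - 1) ▸ hφB (u, M u - 1) (by simp)
    have h2 := hA u r hr.ge
    have h3 : M u ≤ r := by exact_mod_cast hr ▸ hMf u
    nlinarith
  exact ⟨ℓ, β, t, hβ, hB, hA⟩

theorem ERealConvex.exists_affine_between {f : X → EReal} (hf : ERealConvex f) {M : X → ℝ}
    (hM : ConcaveOn ℝ univ M) (hM_cont : Continuous M) (hMf : ∀ v, (M v : EReal) ≤ f v)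
    {u : X} (hu : f u ≠ ⊤) :
    ∃ (ℓ : X →L[ℝ] ℝ) (c : ℝ), ∀ v, M v ≤ ℓ v + c ∧ ((ℓ v + c : ℝ) : EReal) ≤ f v := by
  obtain ⟨ℓ, β, t, hβ, hB, hA⟩ := hf.exists_separating hM hM_cont hMf hu
  refine ⟨-(β⁻¹ • ℓ), t / β, fun v => ⟨?_, ?_⟩⟩
  · have := hB v
    simp only [neg_apply, smul_apply, smul_eq_mul]
    rw [← sub_nonneg]
    field_simp
    linarith
  · rcases eq_or_ne (f v) ⊤ with htop | htop
    · simp [htop]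
    obtain ⟨s, hs⟩ : ∃ s : ℝ, (s : EReal) = f v :=
      ⟨_, EReal.coe_toReal htop (ne_bot_of_le_ne_bot (EReal.coe_ne_bot _) (hMf v))⟩
    have := hA v s hs.ge
    rw [← hs, EReal.coe_le_coe_iff]
    simp only [neg_apply, smul_apply, smul_eq_mul]
    rw [← sub_nonneg]
    field_simp
    linarith

lemma concaveOn_add_sub_norm (x' : X →L[ℝ] ℝ) (r : ℝ) {α : ℝ} (hα : 0 ≤ α) (u : X) :
    ConcaveOn ℝ univ fun v => r + x' (v - u) - α * ‖v - u‖ := by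
  refine ⟨convex_univ, fun v _ w _ a b ha hb hab => ?_⟩
  have hsplit : a • v + b • w - u = a • (v - u) + b • (w - u) := by
    linear_combination (norm := module) hab • u
  have hnorm : ‖a • (v - u) + b • (w - u)‖ ≤ a * ‖v - u‖ + b * ‖w - u‖ := by
    refine (norm_add_le _ _).trans_eq ?_
    rw [norm_smul, norm_smul, Real.norm_of_nonneg ha, Real.norm_of_nonneg hb]
  simp only [hsplit, map_add, map_smul, smul_eq_mul]
  linarith [mul_le_mul_of_nonneg_left hnorm hα, congrArg (· * r) hab]

theorem exists_mem_subdiff_norm_sub_le {f : X → EReal} (hf : ERealConvex f) {u : X}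
    (hu : f u ≠ ⊤) {x' : X →L[ℝ] ℝ} {α : ℝ} (hα : 0 ≤ α)
    (h : ∀ v, f u + ↑(x' (v - u)) ≤ f v + ↑(α * ‖v - u‖)) :
    ∃ y ∈ subdiff f u, ‖y - x'‖ ≤ α := by
  rcases eq_or_ne (f u) ⊥ with hbot | hbot
  · exact ⟨x', ⟨hu, fun z => by simp [hbot]⟩, by simpa using hα⟩
  obtain ⟨r, hr⟩ : ∃ r : ℝ, (r : EReal) = f u := ⟨_, EReal.coe_toReal hu hbot⟩
  have hMf : ∀ v, ((r + x' (v - u) - α * ‖v - u‖ : ℝ) : EReal) ≤ f v := fun v => by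
    have := EReal.sub_le_of_le_add (h v)
    rwa [← hr, ← EReal.coe_add, ← EReal.coe_sub] at this
  obtain ⟨ℓ, c, hℓ⟩ := hf.exists_affine_between (concaveOn_add_sub_norm x' r hα u)
    (by fun_prop) hMf hu
  have hc : ℓ u + c = r :=
    le_antisymm (by exact_mod_cast hr ▸ (hℓ u).2) (by simpa using (hℓ u).1)
  refine ⟨ℓ, ⟨hu, fun v => ?_⟩,
    (norm_sub_rev _ _).trans_le ((x' - ℓ).norm_le_of_forall_apply_le hα fun v => ?_)⟩
  · rw [← hr, ← EReal.coe_add]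
    refine le_trans (le_of_eq ?_) (hℓ v).2
    rw [map_sub]
    congr 1
    linarith
  · have := (hℓ (u + v)).1
    simp only [add_sub_cancel_left, map_add] at this
    simp only [sub_apply]
    linarith

end Subdifferential

section Growth

variable {X : Type*} [NormedAddCommGroup X] [NormedSpace ℝ X]

theorem brondsted_rockafellar [CompleteSpace X] {f : X → EReal} (hbot : ∀ x, f x ≠ ⊥)
    (hlsc : LowerSemicontinuous f) (hf : ERealConvex f) {x : X} (hx : f x ≠ ⊤)
    {x' : X →L[ℝ] ℝ} {ε : ℝ} (hε : 0 < ε) (h : ∀ v, f x + ↑(x' (v - x)) ≤ f v + ↑ε)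
    {δ : ℝ} (hδ : 0 < δ) : ∃ u, ‖u - x‖ ≤ δ ∧ ∃ y ∈ subdiff f u, ‖y - x'‖ ≤ ε / δ := by
  obtain ⟨r, hr⟩ : ∃ r : ℝ, (r : EReal) = f x := ⟨_, EReal.coe_toReal hx (hbot x)⟩
  set g : X → EReal := fun v => f v + ↑(ε - r - x' (v - x)) with hg
  have hg0 : ∀ v, 0 ≤ g v := fun v => by
    have hv := h v
    rcases eq_or_ne (f v) ⊤ with htop | htop
    · simp only [hg, htop, EReal.top_add_coe, le_top]
    obtain ⟨s, hs⟩ : ∃ s : ℝ, (s : EReal) = f v := ⟨_, EReal.coe_toReal htop (hbot v)⟩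
    rw [← hr, ← hs] at hv
    simp only [hg, ← hs]
    norm_cast at hv ⊢
    linarith
  have hgx : g x = ε := by
    rw [hg]
    dsimp only
    rw [sub_self, map_zero, sub_zero, ← hr, ← EReal.coe_add, add_sub_cancel]
  obtain ⟨u, hux, hmin⟩ := ekeland_variational_principle (g := g) (hlsc.add_coe (by fun_prop)) hg0
    (div_pos hε hδ) (hgx ▸ EReal.coe_ne_top ε)
  rw [hgx] at hux
  have hgu : g u ≠ ⊤ :=
    ne_top_of_le_ne_top (EReal.coe_ne_top ε) ((le_add_of_nonneg_right (by positivity)).trans hux)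
  have hfu : f u ≠ ⊤ := fun htop => hgu (by simp only [hg, htop, EReal.top_add_coe])
  refine ⟨u, ?_, exists_mem_subdiff_norm_sub_le hf hfu (div_pos hε hδ).le fun v => ?_⟩
  · have hdist : ε / δ * dist u x ≤ ε := by
      exact_mod_cast (le_add_of_nonneg_left (hg0 u)).trans hux
    rw [← dist_eq_norm]
    rwa [div_mul_eq_mul_div, div_le_iff₀ hδ, mul_le_mul_iff_right₀ hε] at hdist
  · have hv := hmin v
    rcases eq_or_ne (f v) ⊤ with htop | htop
    · simp only [htop, EReal.top_add_coe, le_top]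
    obtain ⟨a, ha⟩ : ∃ a : ℝ, (a : EReal) = f u := ⟨_, EReal.coe_toReal hfu (hbot u)⟩
    obtain ⟨s, hs⟩ : ∃ s : ℝ, (s : EReal) = f v := ⟨_, EReal.coe_toReal htop (hbot v)⟩
    simp only [hg, ← ha, ← hs, dist_eq_norm] at hv ⊢
    norm_cast at hv ⊢
    rw [show v - x = (v - u) + (u - x) by abel, map_add] at hv
    linarith

theorem eventually_quadratic_growth_of_subregular [CompleteSpace X] {f : X → EReal}
    (hbot : ∀ x, f x ≠ ⊥) (hlsc : LowerSemicontinuous f) (hf : ERealConvex f) {xbar : X}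
    {ybar : X →L[ℝ] ℝ} (hybar : ybar ∈ subdiff f xbar) {κ : ℝ} (hκ : 0 < κ) {U : Set X}
    (hU : U ∈ 𝓝 xbar) (hsub : ∀ x ∈ U, ∀ y ∈ subdiff f x, ‖x - xbar‖ ≤ κ * ‖y - ybar‖) :
    ∀ᶠ x in 𝓝 xbar, f xbar + ↑(ybar (x - xbar) + (5 * κ)⁻¹ * ‖x - xbar‖ ^ 2) ≤ f x := by
  obtain ⟨δ, hδ, hball⟩ := Metric.mem_nhds_iff.1 hU
  filter_upwards [ball_mem_nhds xbar (half_pos hδ)] with x hx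
  by_contra! hlt
  have hρ : 0 < ‖x - xbar‖ := norm_pos_iff.2 (sub_ne_zero.2 fun hx => by subst hx; simp at hlt)
  set ρ := ‖x - xbar‖
  have hεsub : ∀ v, f x + ↑(ybar (v - x)) ≤ f v + ↑((5 * κ)⁻¹ * ρ ^ 2) := fun v =>
    calc f x + ↑(ybar (v - x))
        ≤ f xbar + ↑(ybar (x - xbar) + (5 * κ)⁻¹ * ρ ^ 2) + ↑(ybar (v - x)) :=
          add_le_add_left hlt.le _
      _ = f xbar + ↑(ybar (v - xbar)) + ↑((5 * κ)⁻¹ * ρ ^ 2) := by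
          rw [add_assoc, add_assoc, ← EReal.coe_add, ← EReal.coe_add,
            show v - xbar = (v - x) + (x - xbar) by abel, map_add]
          ring_nf
      _ ≤ f v + ↑((5 * κ)⁻¹ * ρ ^ 2) := add_le_add_left (hybar.2 v) _
  obtain ⟨u, hux, y, hy, hyy⟩ := brondsted_rockafellar hbot hlsc hf hlt.ne_top (by positivity)
    hεsub (half_pos hρ)
  have hu_near : ρ / 2 ≤ ‖u - xbar‖ := by
    have := norm_sub_le_norm_sub_add_norm_sub x u xbar
    rw [norm_sub_rev x u] at this
    linarith
  have hu : u ∈ U := hball <| by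
    rw [mem_ball, dist_eq_norm]
    have := norm_sub_le_norm_sub_add_norm_sub u x xbar
    rw [mem_ball, dist_eq_norm] at hx
    linarith
  have hκbound : κ * ((5 * κ)⁻¹ * ρ ^ 2 / (ρ / 2)) = 2 / 5 * ρ := by field_simp
  nlinarith [hsub u hu y hy, mul_le_mul_of_nonneg_left hyy hκ.le]

end Growth

section Contingent

variable {X : Type*} [NormedAddCommGroup X] [NormedSpace ℝ X] {f : X → EReal} {xbar : X}
  {ybar : X →L[ℝ] ℝ} {c : ℝ}

lemma mul_norm_sq_le_of_growth_of_mem_subdiff (h_top : f xbar ≠ ⊤) (h_bot : f xbar ≠ ⊥)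
    {t : ℝ} (ht : 0 < t) {w : X} {z : X →L[ℝ] ℝ}
    (hgrowth : f xbar + ↑(ybar (t • w) + c * ‖t • w‖ ^ 2) ≤ f (xbar + t • w))
    (hsub : ybar + t • z ∈ subdiff f (xbar + t • w)) : c * ‖w‖ ^ 2 ≤ z w := by
  obtain ⟨r, hr⟩ : ∃ r : ℝ, (r : EReal) = f xbar := ⟨_, EReal.coe_toReal h_top h_bot⟩
  have h := (add_le_add_left hgrowth _).trans (hsub.2 xbar)
  rw [← hr, ← EReal.coe_add, ← EReal.coe_add, EReal.coe_le_coe_iff] at h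
  simp only [sub_add_cancel_left, map_neg, map_smul, add_apply, smul_apply, smul_eq_mul,
    norm_smul, Real.norm_of_nonneg ht.le] at h
  have h' : t ^ 2 * (c * ‖w‖ ^ 2) ≤ t ^ 2 * z w := by nlinarith
  exact le_of_mul_le_mul_left h' (by positivity)

theorem mul_norm_sq_le_of_mem_contingentCone (h_top : f xbar ≠ ⊤) (h_bot : f xbar ≠ ⊥)
    (hgrowth : ∀ᶠ x in 𝓝 xbar, f xbar + ↑(ybar (x - xbar) + c * ‖x - xbar‖ ^ 2) ≤ f x)
    {w : X} {z : X →L[ℝ] ℝ}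
    (hwz : (w, z) ∈ contingentCone {p : X × (X →L[ℝ] ℝ) | p.2 ∈ subdiff f p.1} (xbar, ybar)) :
    c * ‖w‖ ^ 2 ≤ z w := by
  obtain ⟨τ, p, hτ_pos, hτ, hp, hmem⟩ := hwz
  have hw : Tendsto (fun n => (p n).1) atTop (𝓝 w) := (continuous_fst.tendsto _).comp hp
  have hz : Tendsto (fun n => (p n).2) atTop (𝓝 z) := (continuous_snd.tendsto _).comp hp
  have hx : Tendsto (fun n => xbar + τ n • (p n).1) atTop (𝓝 xbar) := by
    simpa using (hτ.smul hw).const_add xbar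
  have hle : ∀ᶠ n in atTop, c * ‖(p n).1‖ ^ 2 ≤ (p n).2 (p n).1 := by
    filter_upwards [hx.eventually hgrowth] with n hn
    exact mul_norm_sq_le_of_growth_of_mem_subdiff h_top h_bot (hτ_pos n)
      (by simpa using hn) (hmem n)
  exact le_of_tendsto_of_tendsto ((hw.norm.pow 2).const_mul c)
    ((isBoundedBilinearMap_apply.continuous.tendsto (z, w)).comp (hz.prodMk_nhds hw)) hle

end Contingent

theorem stmt_8_general {X : Type*} [NormedAddCommGroup X] [NormedSpace ℝ X] [CompleteSpace X]
    (f : X → EReal)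
    (hne_bot : ∀ x, f x ≠ ⊥)
    (hlsc : LowerSemicontinuous f)
    (hconv : ∀ x y : X, ∀ a b : ℝ, 0 ≤ a → 0 ≤ b → a + b = 1 →
      f (a • x + b • y) ≤ (a : EReal) * f x + (b : EReal) * f y)
    (xbar : X) (ybar : X →L[ℝ] ℝ) (hybar : ybar ∈ subdiff f xbar)
    (hsubreg : ∃ κ > (0 : ℝ), ∃ U ∈ 𝓝 xbar, ∀ x ∈ U, ∀ y ∈ subdiff f x,
      ‖x - xbar‖ ≤ κ * ‖y - ybar‖) :
    ∃ c > (0 : ℝ), ∀ (w : X) (z : X →L[ℝ] ℝ),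
      (w, z) ∈ contingentCone {p : X × (X →L[ℝ] ℝ) | p.2 ∈ subdiff f p.1} (xbar, ybar) →
      c * ‖w‖ ^ 2 ≤ z w := by
  obtain ⟨κ, hκ, U, hU, hsub⟩ := hsubreg
  have hgrowth := eventually_quadratic_growth_of_subregular hne_bot hlsc hconv hybar hκ hU hsub
  exact ⟨(5 * κ)⁻¹, by positivity, fun w z =>
    mul_norm_sq_le_of_mem_contingentCone hybar.1 (hne_bot xbar) hgrowth⟩

/-- If `f ∈ Γ(X)` on a Banach space, `ȳ* ∈ ∂f(x̄)`, and `∂f` is strongly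
metrically subregular at `x̄` for `ȳ*` (for some constant `κ > 0` and neighborhood `U`,
`‖x - x̄‖ ≤ κ·d(ȳ*, ∂f(x))` on `U`, stated pointwise over `y ∈ ∂f(x)`), then there is a
constant `c > 0` such that the contingent derivative `D∂f(x̄|ȳ*)` is positive-definite
with modulus `c`: `⟨z*, w⟩ ≥ c·‖w‖²` for all `w ∈ X` and `z* ∈ D∂f(x̄|ȳ*)(w)`. -/
theorem stmt_8 {X : Type*} [NormedAddCommGroup X] [NormedSpace ℝ X] [CompleteSpace X]
    (f : X → EReal)
    (hproper : ∃ x, f x ≠ ⊤) (hne_bot : ∀ x, f x ≠ ⊥)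
    (hlsc : LowerSemicontinuous f)
    (hconv : ∀ x y : X, ∀ a b : ℝ, 0 ≤ a → 0 ≤ b → a + b = 1 →
      f (a • x + b • y) ≤ (a : EReal) * f x + (b : EReal) * f y)
    (xbar : X) (ybar : X →L[ℝ] ℝ) (hybar : ybar ∈ subdiff f xbar)
    (hsubreg : ∃ κ > (0 : ℝ), ∃ U ∈ 𝓝 xbar, ∀ x ∈ U, ∀ y ∈ subdiff f x,
      ‖x - xbar‖ ≤ κ * ‖y - ybar‖) :
    ∃ c > (0 : ℝ), ∀ (w : X) (z : X →L[ℝ] ℝ),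
      (w, z) ∈ contingentCone {p : X × (X →L[ℝ] ℝ) | p.2 ∈ subdiff f p.1} (xbar, ybar) →
      c * ‖w‖ ^ 2 ≤ z w :=
  stmt_8_general f hne_bot hlsc hconv xbar ybar hybar hsubreg
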